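/- The function d(x₁,x₂) = α + β·x₁^{p₁} + γ·x₂^{p₂} with α > 0, β, γ ≥ 0, p₁, p₂ ≥ 1, satisfies: there exists a > 0 such that for all (x₁,x₂), (x̃₁,x̃₂) ∈ [0,∞)² with 2|x₁−x̃₁| + |x₂−x̃₂| ≤ a, |d(x₁,x₂) − d(x̃₁,x̃₂)|·a ≤ (|x₁−x̃₁| + |x₂−x̃₂|)·max(d(x₁,x₂), d(x̃₁,x̃₂)). -/

import Mathlib

/-!
By the mean value theorem, `|x ^ p - y ^ p| ≤ p M ^ (p - 1) |x - y|` with `M = max x y`, and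
`M ^ (p - 1) ≤ 1 + M ^ p ≤ 1 + x ^ p + y ^ p`. Once `a p (α + β) ≤ α / 2`, the factor
`a β p (1 + M ^ p)` is absorbed into `α + β (x ^ p + y ^ p) / 2`. Summing over both coordinates,
`a |d x - d y|` is at most `(|x₁ - y₁| + |x₂ - y₂|)` times the average of `d x` and `d y`, which
is at most their maximum.
-/

open Set

namespace Real

theorem abs_rpow_sub_rpow_le_of_mem_Icc {p M x y : ℝ} (hp : 1 ≤ p) (hx : x ∈ Icc 0 M)
    (hy : y ∈ Icc 0 M) : |x ^ p - y ^ p| ≤ p * M ^ (p - 1) * |x - y| := by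
  have hderiv : ∀ t ∈ Icc 0 M, HasDerivWithinAt (· ^ p) (p * t ^ (p - 1)) (Icc 0 M) t :=
    fun t _ ↦ (hasDerivAt_rpow_const (Or.inr hp)).hasDerivWithinAt
  have hbound : ∀ t ∈ Icc 0 M, ‖p * t ^ (p - 1)‖ ≤ p * M ^ (p - 1) := fun t ht ↦ by
    rw [norm_of_nonneg (by have := rpow_nonneg ht.1 (p - 1); positivity)]
    exact mul_le_mul_of_nonneg_left (rpow_le_rpow ht.1 ht.2 (by linarith)) (by linarith)
  exact (convex_Icc 0 M).norm_image_sub_le_of_norm_hasDerivWithin_le hderiv hbound hy hx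

theorem rpow_sub_one_le_one_add_rpow {p x : ℝ} (hp : 1 ≤ p) (hx : 0 ≤ x) :
    x ^ (p - 1) ≤ 1 + x ^ p := by
  rcases le_total x 1 with hx1 | hx1
  · linarith [rpow_le_one hx hx1 (by linarith : 0 ≤ p - 1), rpow_nonneg hx p]
  · linarith [rpow_le_rpow_of_exponent_le hx1 (by linarith : p - 1 ≤ p)]

end Real

open Real

theorem mul_abs_mul_rpow_sub_mul_rpow_le {α β p a x y : ℝ} (hα : 0 < α) (hβ : 0 ≤ β)
    (hp : 1 ≤ p) (ha : 0 ≤ a) (hsmall : a * (p * (α + β)) ≤ α / 2) (hx : 0 ≤ x) (hy : 0 ≤ y) :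
    a * |β * x ^ p - β * y ^ p| ≤ |x - y| * (α + β * (x ^ p + y ^ p) / 2) := by
  set M := max x y
  have hM : 0 ≤ M := le_max_of_le_left hx
  have hMp : M ^ p ≤ x ^ p + y ^ p := by
    rw [rpow_max hx hy (by linarith)]
    exact max_le_add_of_nonneg (rpow_nonneg hx p) (rpow_nonneg hy p)
  have hmvt : |x ^ p - y ^ p| ≤ p * M ^ (p - 1) * |x - y| :=
    abs_rpow_sub_rpow_le_of_mem_Icc hp ⟨hx, le_max_left x y⟩ ⟨hy, le_max_right x y⟩
  have hcoef : a * β * p * (1 + M ^ p) ≤ α + β * M ^ p / 2 := by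
    have hap₀ : 0 ≤ a * p := mul_nonneg ha (by linarith)
    have hap : a * p ≤ 1 / 2 := by nlinarith [mul_nonneg hap₀ hβ]
    have hapβ : a * p * β ≤ α := by nlinarith
    nlinarith [mul_le_mul_of_nonneg_right hap (mul_nonneg hβ (rpow_nonneg hM p))]
  calc a * |β * x ^ p - β * y ^ p| = a * β * |x ^ p - y ^ p| := by
        rw [← mul_sub, abs_mul, abs_of_nonneg hβ, mul_assoc]
    _ ≤ a * β * (p * M ^ (p - 1) * |x - y|) := by gcongr
    _ = |x - y| * (a * β * p * M ^ (p - 1)) := by ring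
    _ ≤ |x - y| * (a * β * p * (1 + M ^ p)) := by
        gcongr
        exact rpow_sub_one_le_one_add_rpow hp hM
    _ ≤ |x - y| * (α + β * M ^ p / 2) := by gcongr
    _ ≤ |x - y| * (α + β * (x ^ p + y ^ p) / 2) := by gcongr

theorem stmt_10 (α β γ p₁ p₂ : ℝ) (hα : 0 < α) (hβ : 0 ≤ β) (hγ : 0 ≤ γ)
    (hp₁ : 1 ≤ p₁) (hp₂ : 1 ≤ p₂)
    (d : ℝ → ℝ → ℝ)
    (hd : ∀ x₁ x₂, 0 ≤ x₁ → 0 ≤ x₂ → d x₁ x₂ = α + β * x₁ ^ p₁ + γ * x₂ ^ p₂) :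
    ∃ a > 0, ∀ x₁ x₂ y₁ y₂ : ℝ, 0 ≤ x₁ → 0 ≤ x₂ → 0 ≤ y₁ → 0 ≤ y₂ →
      2 * |x₁ - y₁| + |x₂ - y₂| ≤ a →
      |d x₁ x₂ - d y₁ y₂| * a ≤ (|x₁ - y₁| + |x₂ - y₂|) * max (d x₁ x₂) (d y₁ y₂) := by
  set a := min (α / 2 / (p₁ * (α + β))) (α / 2 / (p₂ * (α + γ)))
  have ha : 0 < a := lt_min (by positivity) (by positivity)
  have hsmall₁ : a * (p₁ * (α + β)) ≤ α / 2 := (le_div_iff₀ (by positivity)).1 (min_le_left _ _)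
  have hsmall₂ : a * (p₂ * (α + γ)) ≤ α / 2 := (le_div_iff₀ (by positivity)).1 (min_le_right _ _)
  refine ⟨a, ha, fun x₁ x₂ y₁ y₂ hx₁ hx₂ hy₁ hy₂ _ ↦ ?_⟩
  have h₁ := mul_abs_mul_rpow_sub_mul_rpow_le hα hβ hp₁ ha.le hsmall₁ hx₁ hy₁
  have h₂ := mul_abs_mul_rpow_sub_mul_rpow_le hα hγ hp₂ ha.le hsmall₂ hx₂ hy₂
  have hmax := add_le_add (le_max_left (d x₁ x₂) (d y₁ y₂)) (le_max_right (d x₁ x₂) (d y₁ y₂))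
  rw [hd x₁ x₂ hx₁ hx₂, hd y₁ y₂ hy₁ hy₂] at hmax ⊢
  have hβsum : 0 ≤ β * (x₁ ^ p₁ + y₁ ^ p₁) := by positivity
  have hγsum : 0 ≤ γ * (x₂ ^ p₂ + y₂ ^ p₂) := by positivity
  calc |α + β * x₁ ^ p₁ + γ * x₂ ^ p₂ - (α + β * y₁ ^ p₁ + γ * y₂ ^ p₂)| * a
      = a * |(β * x₁ ^ p₁ - β * y₁ ^ p₁) + (γ * x₂ ^ p₂ - γ * y₂ ^ p₂)| := by
        rw [mul_comm]; congr 2; ring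
    _ ≤ a * |β * x₁ ^ p₁ - β * y₁ ^ p₁| + a * |γ * x₂ ^ p₂ - γ * y₂ ^ p₂| := by
        rw [← mul_add]; gcongr; exact abs_add_le _ _
    _ ≤ |x₁ - y₁| * (α + β * (x₁ ^ p₁ + y₁ ^ p₁) / 2)
        + |x₂ - y₂| * (α + γ * (x₂ ^ p₂ + y₂ ^ p₂) / 2) := add_le_add h₁ h₂
    _ ≤ (|x₁ - y₁| + |x₂ - y₂|)
        * ((α + β * x₁ ^ p₁ + γ * x₂ ^ p₂ + (α + β * y₁ ^ p₁ + γ * y₂ ^ p₂)) / 2) := by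
        nlinarith [mul_nonneg (abs_nonneg (x₁ - y₁)) hγsum, mul_nonneg (abs_nonneg (x₂ - y₂)) hβsum]
    _ ≤ _ := by gcongr; linarith
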